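/- arXiv:0804.2080 — 2 statements merged into one kernel-verified Lean document; each statement's English description precedes it below -/
import Mathlib

section
/- Let B be an admissible bilinear form on 'f (i.e. B(1,1) = 1, B(θ_i,θ_j) = δ_{ij}(1-q_i²)^{-1}, B(x, y y') = (B⊗B)(r(x), y⊗y'), B(x x', y) = (B⊗B)(x⊗x', r(y))). Then its radical 𝕴 = { x ∈ 'f : B(x,y) = 0 for all y ∈ 'f } is a two-sided ideal of 'f: if x ∈ 𝕴 and z ∈ 'f then zx ∈ 𝕴 and xz ∈ 𝕴. -/
open scoped TensorProduct

noncomputable section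

/-- The ground field `𝕂 = ℚ(q)`. -/
abbrev K : Type := RatFunc ℚ

/-- `q ∈ ℚ(q)`. -/
abbrev qvar : K := RatFunc.X

/-- The free associative algebra `'f` on generators `θ i`, `i ∈ I`. -/
abbrev F (I : Type) : Type := FreeAlgebra K I

/-- The generators `θ i` of `'f`. -/
def θ {I : Type} (i : I) : F I := FreeAlgebra.ι K i

/-- A Cartan datum: a symmetric integer matrix with positive even diagonal such that
`2(i·j)/(i·i)` is a nonpositive integer for `i ≠ j`. -/
def CartanDatum {I : Type} (c : I → I → ℤ) : Prop :=
  (∀ i j, c i j = c j i) ∧ (∀ i, 0 < c i i ∧ Even (c i i)) ∧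
    (∀ i j, i ≠ j → c i j ≤ 0 ∧ c i i ∣ 2 * c i j)

/-- `q_i = q^{(i·i)/2}`. -/
def qi {I : Type} (c : I → I → ℤ) (i : I) : K := qvar ^ (c i i / 2)

/-- The bilinear extension of `·` to weights: `ν·μ = Σ_{i,j} ν(i) μ(j) (i·j)`. -/
def wtPair {I : Type} (c : I → I → ℤ) (ν μ : I →₀ ℕ) : ℤ :=
  ν.sum fun i a => μ.sum fun j b => (a : ℤ) * (b : ℤ) * c i j

/-- The subspace of `'f` of homogeneous elements of weight `ν ∈ ℕ[I]`: the span of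
all words `θ_{i_1} ⋯ θ_{i_r}` whose letters have multiplicities `ν`. -/
def wtSpace {I : Type} [DecidableEq I] (ν : I →₀ ℕ) : Submodule K (F I) :=
  Submodule.span K
    {x | ∃ l : List I, Multiset.toFinsupp (l : Multiset I) = ν ∧ x = (l.map θ).prod}

/-- The twisted multiplication on `'f ⊗ 'f`:
`(x₁⊗x₂)(y₁⊗y₂) = q^{-|x₂|·|y₁|} (x₁y₁)⊗(x₂y₂)` on homogeneous elements. -/
def IsTwistedMul {I : Type} [DecidableEq I] (c : I → I → ℤ)
    (m : F I ⊗[K] F I →ₗ[K] F I ⊗[K] F I →ₗ[K] F I ⊗[K] F I) : Prop :=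
  ∀ (ν μ : I →₀ ℕ) (x₁ x₂ y₁ y₂ : F I), x₂ ∈ wtSpace ν → y₁ ∈ wtSpace μ →
    m (x₁ ⊗ₜ[K] x₂) (y₁ ⊗ₜ[K] y₂) =
      (qvar ^ (-(wtPair c ν μ))) • ((x₁ * y₁) ⊗ₜ[K] (x₂ * y₂))

/-- `r : 'f → 'f ⊗ 'f` is an algebra homomorphism to the twisted tensor square with
`r(θ_i) = θ_i ⊗ 1 + 1 ⊗ θ_i`. -/
def IsComult {I : Type} (m : F I ⊗[K] F I →ₗ[K] F I ⊗[K] F I →ₗ[K] F I ⊗[K] F I)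
    (r : F I →ₗ[K] F I ⊗[K] F I) : Prop :=
  r 1 = (1 : F I) ⊗ₜ[K] (1 : F I) ∧ (∀ x y, r (x * y) = m (r x) (r y)) ∧
    ∀ i, r (θ i) = θ i ⊗ₜ[K] 1 + 1 ⊗ₜ[K] θ i

/-- The bilinear form `B⊗B` on `'f ⊗ 'f`, `(B⊗B)(x₁⊗x₂, y₁⊗y₂) = B(x₁,y₁)B(x₂,y₂)`. -/
def BB {I : Type} (B : F I →ₗ[K] F I →ₗ[K] K) :
    F I ⊗[K] F I →ₗ[K] F I ⊗[K] F I →ₗ[K] K :=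
  LinearMap.BilinForm.tmul B B

/-- Admissibility of a bilinear form on `'f`. -/
def Admissible {I : Type} [DecidableEq I] (c : I → I → ℤ) (r : F I →ₗ[K] F I ⊗[K] F I)
    (B : F I →ₗ[K] F I →ₗ[K] K) : Prop :=
  B 1 1 = 1 ∧
    (∀ i j, B (θ i) (θ j) = if i = j then (1 - qi c i ^ 2)⁻¹ else 0) ∧
    (∀ x y y', B x (y * y') = BB B (r x) (y ⊗ₜ[K] y')) ∧
    (∀ x x' y, B (x * x') y = BB B (x ⊗ₜ[K] x') (r y))

lemma BB_tmul {I : Type} (B : F I →ₗ[K] F I →ₗ[K] K) (a b x y : F I) :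
    BB B (a ⊗ₜ[K] b) (x ⊗ₜ[K] y) = B a x * B b y := by
  simp [BB, LinearMap.BilinForm.tensorDistrib_tmul, mul_comm]

/-- the radical of an admissible bilinear form is a two-sided ideal of 'f. -/
theorem radical_is_twoSided_ideal {I : Type} [Fintype I] [DecidableEq I]
    (c : I → I → ℤ) (hc : CartanDatum c)
    (m : F I ⊗[K] F I →ₗ[K] F I ⊗[K] F I →ₗ[K] F I ⊗[K] F I)
    (hm : IsTwistedMul c m)
    (r : F I →ₗ[K] F I ⊗[K] F I) (hr : IsComult m r)
    (B : F I →ₗ[K] F I →ₗ[K] K) (hB : Admissible c r B) :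
    ∀ x : F I, (∀ y : F I, B x y = 0) →
      ∀ z : F I, (∀ y : F I, B (z * x) y = 0) ∧ (∀ y : F I, B (x * z) y = 0) := by
  intro x hx z
  constructor
  · intro y
    rw [hB.2.2.2 z x y]
    induction r y using TensorProduct.induction_on with
    | zero => simp
    | tmul a b => rw [BB_tmul, hx b, mul_zero]
    | add u v hu hv => rw [map_add, hu, hv, add_zero]
  · intro y
    rw [hB.2.2.2 x z y]
    induction r y using TensorProduct.induction_on with
    | zero => simp
    | tmul a b => rw [BB_tmul, hx a, zero_mul]
    | add u v hu hv => rw [map_add, hu, hv, add_zero]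
end
end

section
/- The operator e_n is an idempotent: e_n ∘ e_n = e_n, i.e. for every f ∈ P, x_1^{n-1}⋯x_{n-1}·∂(n)( x_1^{n-1}⋯x_{n-1}·∂(n)(f) ) = x_1^{n-1}⋯x_{n-1}·∂(n)(f). -/
noncomputable section

open MvPolynomial

/-- The reduced word (s_1)(s_2 s_1)(s_3 s_2 s_1)⋯(s_{n-1}⋯s_1) of the longest element of
the symmetric group S_n, written 0-indexed (the simple transposition s_{k+1} corresponds
to the index k). -/
def nilWord (n : ℕ) : List ℕ :=
  (List.range (n - 1)).flatMap fun t => (List.range (t + 1)).reverse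

/-- The composite ∂(n) = ∂_{i_1} ∘ ⋯ ∘ ∂_{i_N} of the divided difference operators D
along the reduced word (s_1)(s_2 s_1)⋯(s_{n-1}⋯s_1) of the longest element of S_n. -/
def longOp {n : ℕ} (D : ℕ → MvPolynomial (Fin n) ℤ →ₗ[ℤ] MvPolynomial (Fin n) ℤ) :
    MvPolynomial (Fin n) ℤ →ₗ[ℤ] MvPolynomial (Fin n) ℤ :=
  (nilWord n).foldr (fun k acc => (D k).comp acc) LinearMap.id

/-- The staircase monomial x_1^{n-1} x_2^{n-2} ⋯ x_{n-1} (variables 0-indexed). -/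
def staircase (n : ℕ) : MvPolynomial (Fin n) ℤ :=
  ∏ i : Fin n, X i ^ (n - 1 - (i : ℕ))

/-- D k is, for each k with k+1 ≤ n-1 (0-indexed: k+1 < n), the divided difference
operator ∂_{k+1}, uniquely determined by (x_{k+1} - x_{k+2})·∂_{k+1}(f) = f - s_{k+1}(f). -/
def IsDDiff {n : ℕ} (D : ℕ → MvPolynomial (Fin n) ℤ →ₗ[ℤ] MvPolynomial (Fin n) ℤ) : Prop :=
  ∀ (k : ℕ) (hk : k + 1 < n) (f : MvPolynomial (Fin n) ℤ),
    (X (⟨k, Nat.lt_of_succ_lt hk⟩ : Fin n) - X ⟨k + 1, hk⟩) * D k f =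
      f - rename (Equiv.swap (⟨k, Nat.lt_of_succ_lt hk⟩ : Fin n) ⟨k + 1, hk⟩) f

/-!
The divided differences satisfy the nil-Coxeter relations ∂_k² = 0, ∂_i∂_j = ∂_j∂_i for
|i - j| ≥ 2 and the braid relations. In any monoid with these relations the longest word
absorbs every generator: writing it in blocks B_t = ∂_t ⋯ ∂_0, the braid relations give
B_{k-1} B_k = B_k ∂_k ⋯ ∂_1, so ∂_k B_{k-1} B_k begins with ∂_k ∂_k = 0. Hence
∂_k ∘ ∂(n) = 0 and ∂(n) f is symmetric. As ∂_k is linear over s_k-invariant polynomials,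
∂(n)(x^δ · ∂(n) f) = ∂(n)(x^δ) · ∂(n) f, and ∂(n)(x^δ) = 1 because each ∂_j maps x_j · m to m
for an s_j-invariant monomial m.
-/

namespace MvPolynomial

variable {σ R : Type*} [CommRing R]

theorem X_sub_X_ne_zero [Nontrivial R] {a b : σ} (hab : a ≠ b) :
    (X a - X b : MvPolynomial σ R) ≠ 0 :=
  sub_ne_zero.mpr (X_injective.ne hab)

variable [DecidableEq σ]

theorem rename_swap_rename_swap (a b : σ) (p : MvPolynomial σ R) :
    rename (Equiv.swap a b) (rename (Equiv.swap a b) p) = p := by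
  rw [rename_rename, ← Equiv.Perm.coe_mul, Equiv.swap_mul_self, Equiv.Perm.coe_one,
    rename_id_apply]

theorem rename_swap_prod_X_pow [Fintype σ] {a b : σ} (e : σ → ℕ) (h : e a = e b) :
    rename (Equiv.swap a b) (∏ i, X i ^ e i : MvPolynomial σ R) = ∏ i, X i ^ e i := by
  have he : ∀ i, e (Equiv.swap a b i) = e i := fun i => by
    rcases eq_or_ne i a with rfl | hia
    · simp [h]
    rcases eq_or_ne i b with rfl | hib
    · simp [h]
    · rw [Equiv.swap_apply_of_ne_of_ne hia hib]
  calc rename (Equiv.swap a b) (∏ i, X i ^ e i : MvPolynomial σ R)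
      = ∏ i, X (Equiv.swap a b i) ^ e (Equiv.swap a b i) := by
        simp only [map_prod, map_pow, rename_X, he]
    _ = ∏ i, X i ^ e i := Equiv.prod_comp (Equiv.swap a b) fun i => X i ^ e i

theorem X_mul_prod_X_pow [Fintype σ] (a : σ) (e : σ → ℕ) :
    X a * ∏ i, X i ^ e i = (∏ i, X i ^ (e i + if a = i then 1 else 0) : MvPolynomial σ R) := by
  simp only [pow_add, Finset.prod_mul_distrib, Finset.prod_pow_boole, Finset.mem_univ, if_true,
    mul_comm]

def IsDivDiff (a b : σ) (d : MvPolynomial σ R →ₗ[R] MvPolynomial σ R) : Prop :=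
  ∀ f, (X a - X b) * d f = f - rename (Equiv.swap a b) f

namespace IsDivDiff

variable {a b c e : σ} {d d' : MvPolynomial σ R →ₗ[R] MvPolynomial σ R}

theorem neg (hd : IsDivDiff a b d) : IsDivDiff b a (-d) := fun f => by
  rw [LinearMap.neg_apply, Equiv.swap_comm, ← hd f]
  ring

theorem rename_eq_of_apply_eq_zero (hd : IsDivDiff a b d) {g : MvPolynomial σ R}
    (hg : d g = 0) : rename (Equiv.swap a b) g = g := by
  have h := hd g
  rw [hg, mul_zero, eq_comm, sub_eq_zero] at h
  exact h.symm

variable [IsDomain R]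

theorem rename_apply (hd : IsDivDiff a b d) (hab : a ≠ b) (f : MvPolynomial σ R) :
    rename (Equiv.swap a b) (d f) = d f := by
  refine mul_left_cancel₀ (X_sub_X_ne_zero hab) ?_
  have h := congrArg (rename (Equiv.swap a b)) (hd f)
  simp only [map_mul, map_sub, rename_X, Equiv.swap_apply_left, Equiv.swap_apply_right,
    rename_swap_rename_swap] at h
  linear_combination -h - hd f

theorem mul_self_eq_zero (hd : IsDivDiff a b d) (hab : a ≠ b) : d * d = 0 := by
  refine LinearMap.ext fun f => ?_
  refine mul_left_cancel₀ (X_sub_X_ne_zero hab) ?_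
  rw [Module.End.mul_apply, hd, hd.rename_apply hab, LinearMap.zero_apply, sub_self, mul_zero]

theorem map_mul_of_rename_eq (hd : IsDivDiff a b d) (hab : a ≠ b) (f : MvPolynomial σ R)
    {g : MvPolynomial σ R} (hg : rename (Equiv.swap a b) g = g) : d (f * g) = d f * g := by
  refine mul_left_cancel₀ (X_sub_X_ne_zero hab) ?_
  rw [hd, map_mul, hg]
  linear_combination -g * hd f

theorem apply_X_mul (hd : IsDivDiff a b d) (hab : a ≠ b) {g : MvPolynomial σ R}
    (hg : rename (Equiv.swap a b) g = g) : d (X a * g) = g := by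
  refine mul_left_cancel₀ (X_sub_X_ne_zero hab) ?_
  rw [hd, map_mul, hg, rename_X, Equiv.swap_apply_left]
  ring

theorem commute (hd : IsDivDiff a b d) (hd' : IsDivDiff c e d') (hab : a ≠ b) (hce : c ≠ e)
    (hac : a ≠ c) (hae : a ≠ e) (hbc : b ≠ c) (hbe : b ≠ e) : Commute d d' := by
  refine LinearMap.ext fun f => ?_
  set s := Equiv.swap a b
  set t := Equiv.swap c e
  have hst : rename s (rename t f) = rename t (rename s f) := by
    rw [rename_rename, rename_rename, ← Equiv.Perm.coe_mul, ← Equiv.Perm.coe_mul,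
      (Equiv.Perm.disjoint_swap_swap (by simp [*])).commute.eq]
  have hsd' : (X c - X e) * rename s (d' f) = rename s f - rename s (rename t f) := by
    simpa [s, Equiv.swap_apply_def, hac.symm, hae.symm, hbc.symm, hbe.symm]
      using congrArg (rename s) (hd' f)
  have htd : (X a - X b) * rename t (d f) = rename t f - rename t (rename s f) := by
    simpa [t, Equiv.swap_apply_def, hac, hae, hbc, hbe] using congrArg (rename t) (hd f)
  refine mul_left_cancel₀ (mul_ne_zero (X_sub_X_ne_zero hab) (X_sub_X_ne_zero hce)) ?_
  simp only [Module.End.mul_apply]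
  linear_combination (X c - X e) * hd (d' f) + hd' f - hsd' - (X a - X b) * hd' (d f) - hd f
    + htd + hst

theorem mul_apply_apply_apply (hd : IsDivDiff a b d) (hd' : IsDivDiff b c d') (hab : a ≠ b)
    (hbc : b ≠ c) (hac : a ≠ c) (f : MvPolynomial σ R) :
    (X a - X b) * (X a - X c) * (X b - X c) * d (d' (d f)) =
      f - rename (Equiv.swap a b) f - rename (Equiv.swap b c) f
        + rename (Equiv.swap a b) (rename (Equiv.swap b c) f)
        + rename (Equiv.swap b c) (rename (Equiv.swap a b) f)
        - rename (Equiv.swap a b) (rename (Equiv.swap b c) (rename (Equiv.swap a b) f)) := by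
  set s := Equiv.swap a b
  set t := Equiv.swap b c
  have hsd' :
      (X a - X c) * rename s (d' (d f)) = rename s (d f) - rename s (rename t (d f)) := by
    simpa [s, Equiv.swap_apply_def, hac.symm, hbc.symm] using congrArg (rename s) (hd' (d f))
  have htd : (X a - X c) * rename t (d f) = rename t f - rename t (rename s f) := by
    simpa [t, Equiv.swap_apply_def, hab, hac] using congrArg (rename t) (hd f)
  have hstd : (X b - X c) * rename s (rename t (d f)) =
      rename s (rename t f) - rename s (rename t (rename s f)) := by
    simpa [s, t, Equiv.swap_apply_def, hab, hac, hbc, hab.symm, hac.symm, hbc.symm]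
      using congrArg (fun p => rename s (rename t p)) (hd f)
  linear_combination (X a - X c) * (X b - X c) * hd (d' (d f)) - (X b - X c) * hsd'
    + (X a - X c) * hd' (d f) - (X b - X c) * hd.rename_apply hab f - htd + hstd + hd f

theorem braid (hd : IsDivDiff a b d) (hd' : IsDivDiff b c d') (hab : a ≠ b) (hbc : b ≠ c)
    (hac : a ≠ c) : d * d' * d = d' * d * d' := by
  refine LinearMap.ext fun f => mul_left_cancel₀
    (mul_ne_zero (mul_ne_zero (X_sub_X_ne_zero hab) (X_sub_X_ne_zero hac))
      (X_sub_X_ne_zero hbc)) ?_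
  -- the right-hand side is the left-hand side for the triple (c, b, a) and the operators -d', -d
  have h := hd'.neg.mul_apply_apply_apply hd.neg hbc.symm hab.symm hac.symm f
  simp only [LinearMap.neg_apply, map_neg, neg_neg, Equiv.swap_comm c b, Equiv.swap_comm b a]
    at h
  simp only [Module.End.mul_apply, hd.mul_apply_apply_apply hd' hab hbc hac]
  have hsts : Equiv.swap a b * Equiv.swap b c * Equiv.swap a b = Equiv.swap c a := by
    rw [Equiv.swap_comm a b, Equiv.swap_comm b c, Equiv.swap_mul_swap_mul_swap hbc.symm hac.symm,
      Equiv.swap_comm]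
  have hbr : rename (Equiv.swap a b) (rename (Equiv.swap b c) (rename (Equiv.swap a b) f)) =
      rename (Equiv.swap b c) (rename (Equiv.swap a b) (rename (Equiv.swap b c) f)) := by
    simp only [rename_rename, ← Equiv.Perm.coe_mul, ← mul_assoc, hsts,
      Equiv.swap_mul_swap_mul_swap hab hac]
  linear_combination -h - hbr

end IsDivDiff

end MvPolynomial

theorem nilWord_succ (m : ℕ) : nilWord (m + 1) = nilWord m ++ (List.range m).reverse := by
  cases m with
  | zero => rfl
  | succ m => simp [nilWord, List.range_succ]

theorem add_two_le_of_mem_nilWord {k m : ℕ} (hk : k ∈ nilWord m) : k + 2 ≤ m := by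
  simp only [nilWord, List.mem_flatMap, List.mem_reverse, List.mem_range] at hk
  omega

section NilCoxeter

variable {M : Type*} [MonoidWithZero M]

structure IsNilCoxeter (n : ℕ) (T : ℕ → M) : Prop where
  mul_self_eq_zero : ∀ k, k + 1 < n → T k * T k = 0
  commute : ∀ i j, i + 2 ≤ j → j + 1 < n → Commute (T i) (T j)
  braid : ∀ i, i + 2 < n → T i * T (i + 1) * T i = T (i + 1) * T i * T (i + 1)

def descProd (T : ℕ → M) (b : ℕ) : ℕ → M
  | 0 => 1
  | l + 1 => T (b + l) * descProd T b l

variable {T : ℕ → M} {n : ℕ}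

theorem descProd_succ (b l : ℕ) : descProd T b (l + 1) = T (b + l) * descProd T b l := rfl

theorem descProd_add (b l₁ l₂ : ℕ) :
    descProd T b (l₁ + l₂) = descProd T (b + l₁) l₂ * descProd T b l₁ := by
  induction l₂ with
  | zero => simp [descProd]
  | succ l ih => rw [← add_assoc, descProd_succ, ih, descProd_succ, mul_assoc, add_assoc]

theorem prod_map_range_reverse (m : ℕ) :
    (((List.range m).reverse).map T).prod = descProd T 0 m := by
  induction m with
  | zero => rfl
  | succ m ih =>
    rw [List.range_succ, List.reverse_append, List.map_append, List.prod_append, ih]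
    simp [descProd_succ]

theorem commute_descProd {x : M} {b l : ℕ} (h : ∀ i, b ≤ i → i < b + l → Commute x (T i)) :
    Commute x (descProd T b l) := by
  induction l with
  | zero => exact Commute.one_right x
  | succ l ih =>
    exact (h _ le_self_add (by omega)).mul_right (ih fun i hi hil => h i hi (by omega))

namespace IsNilCoxeter

theorem mono {m : ℕ} (hT : IsNilCoxeter n T) (hmn : m ≤ n) : IsNilCoxeter m T where
  mul_self_eq_zero k hk := hT.mul_self_eq_zero k (by omega)
  commute i j hij hj := hT.commute i j hij (by omega)
  braid i hi := hT.braid i (by omega)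

theorem mul_descProd_eq_descProd_mul (hT : IsNilCoxeter n T) {i a : ℕ} (hia : i < a)
    (ha : a + 1 < n) : T i * descProd T 0 (a + 1) = descProd T 0 (a + 1) * T (i + 1) := by
  rw [show a + 1 = i + 2 + (a - 1 - i) by omega, descProd_add, descProd_succ, descProd_succ]
  simp only [zero_add]
  set L := descProd T (i + 2) (a - 1 - i)
  set R := descProd T 0 i
  have hL : Commute (T i) L := commute_descProd fun j hj _ => hT.commute i j (by omega) (by omega)
  have hR : Commute (T (i + 1)) R :=
    commute_descProd fun j _ hj => (hT.commute j (i + 1) (by omega) (by omega)).symm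
  calc T i * (L * (T (i + 1) * (T i * R)))
      = L * (T i * T (i + 1) * T i) * R := by rw [hL.left_comm]; simp only [mul_assoc]
    _ = L * (T (i + 1) * T i * T (i + 1)) * R := by rw [hT.braid i (by omega)]
    _ = L * (T (i + 1) * (T i * R)) * T (i + 1) := by simp only [mul_assoc, hR.eq]

theorem descProd_mul_descProd_succ (hT : IsNilCoxeter n T) {t : ℕ} (ht : t + 1 < n) :
    descProd T 0 t * descProd T 0 (t + 1) = descProd T 0 (t + 1) * descProd T 1 t := by
  suffices ∀ l ≤ t, descProd T 0 l * descProd T 0 (t + 1) = descProd T 0 (t + 1) * descProd T 1 l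
    from this t le_rfl
  intro l hl
  induction l with
  | zero => simp [descProd]
  | succ l ih =>
    rw [descProd_succ, mul_assoc, ih (by omega), ← mul_assoc, zero_add,
      hT.mul_descProd_eq_descProd_mul (by omega) ht, mul_assoc, descProd_succ 1 l, add_comm 1 l]

theorem mul_descProd_mul_descProd_eq_zero (hT : IsNilCoxeter n T) {k : ℕ} (hk : k + 1 < n) :
    T k * (descProd T 0 k * descProd T 0 (k + 1)) = 0 := by
  rw [hT.descProd_mul_descProd_succ hk, descProd_succ, zero_add, ← mul_assoc, ← mul_assoc,
    hT.mul_self_eq_zero k hk, zero_mul, zero_mul]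

theorem mul_prod_nilWord (hT : IsNilCoxeter n T) {k : ℕ} (hk : k + 1 < n) :
    T k * ((nilWord n).map T).prod = 0 := by
  induction n generalizing k with
  | zero => omega
  | succ n ih =>
    rw [nilWord_succ, List.map_append, List.prod_append, prod_map_range_reverse, ← mul_assoc]
    rcases Nat.lt_or_eq_of_le (Nat.le_of_lt_succ hk) with hkn | rfl
    · rw [ih (hT.mono n.le_succ) hkn, zero_mul]
    · have hW : Commute (T k) ((nilWord k).map T).prod :=
        Commute.list_prod_right _ _ fun x hx => by
          obtain ⟨j, hj, rfl⟩ := List.mem_map.mp hx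
          exact (hT.commute j k (add_two_le_of_mem_nilWord hj) hk).symm
      rw [nilWord_succ, List.map_append, List.prod_append, prod_map_range_reverse,
        ← mul_assoc (T k), hW.eq]
      simp only [mul_assoc]
      rw [hT.mul_descProd_mul_descProd_eq_zero hk, mul_zero]

end IsNilCoxeter

end NilCoxeter

theorem longOp_eq_prod {n : ℕ} (D : ℕ → MvPolynomial (Fin n) ℤ →ₗ[ℤ] MvPolynomial (Fin n) ℤ) :
    longOp D = ((nilWord n).map D).prod := by
  unfold longOp
  induction nilWord n with
  | nil => rfl
  | cons k w ih =>
    rw [List.foldr_cons, ih, List.map_cons, List.prod_cons, Module.End.mul_eq_comp]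

-- the exponents of x_0^(m-1) x_1^(m-2) ⋯ x_(m-2) · x_j x_(j+1) ⋯ x_(m-1): the staircase monomial
-- of m + 1 variables at j = 0 and of m variables at j = m
def stairExp (m j i : ℕ) : ℕ := m - 1 - i + if j ≤ i ∧ i < m then 1 else 0

theorem staircase_eq (n : ℕ) : staircase n = ∏ i : Fin n, X i ^ stairExp n n i := by
  refine Finset.prod_congr rfl fun i _ => ?_
  rw [stairExp, if_neg (by omega), add_zero]

namespace IsDDiff

variable {n : ℕ} {D : ℕ → MvPolynomial (Fin n) ℤ →ₗ[ℤ] MvPolynomial (Fin n) ℤ}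

theorem isDivDiff (hD : IsDDiff D) {k : ℕ} (hk : k + 1 < n) :
    IsDivDiff ⟨k, Nat.lt_of_succ_lt hk⟩ ⟨k + 1, hk⟩ (D k) :=
  hD k hk

theorem isNilCoxeter (hD : IsDDiff D) : IsNilCoxeter n D where
  mul_self_eq_zero k hk := (hD.isDivDiff hk).mul_self_eq_zero (by simp)
  commute i j hij hj := (hD.isDivDiff (k := i) (by omega)).commute (hD.isDivDiff hj)
    (by simp) (by simp) (by simp only [ne_eq, Fin.mk.injEq]; omega)
    (by simp only [ne_eq, Fin.mk.injEq]; omega) (by simp only [ne_eq, Fin.mk.injEq]; omega)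
    (by simp only [ne_eq, Fin.mk.injEq]; omega)
  braid i hi := (hD.isDivDiff (k := i) (by omega)).braid (hD.isDivDiff hi) (by simp) (by simp)
    (by simp only [ne_eq, Fin.mk.injEq]; omega)

theorem prod_map_apply_mul (hD : IsDDiff D) {w : List ℕ} (hw : ∀ k ∈ w, k + 1 < n)
    (f : MvPolynomial (Fin n) ℤ) {g : MvPolynomial (Fin n) ℤ}
    (hg : ∀ k, k + 1 < n → D k g = 0) :
    (w.map D).prod (f * g) = (w.map D).prod f * g := by
  induction w with
  | nil => rfl
  | cons k w ih =>
    have hk : k + 1 < n := hw k List.mem_cons_self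
    rw [List.map_cons, List.prod_cons, Module.End.mul_apply, Module.End.mul_apply,
      ih fun j hj => hw j (List.mem_cons_of_mem k hj),
      (hD.isDivDiff hk).map_mul_of_rename_eq (by simp) _
        ((hD.isDivDiff hk).rename_eq_of_apply_eq_zero (hg k hk))]

theorem apply_prod_X_pow_stairExp (hD : IsDDiff D) {m j : ℕ} (hjm : j < m) (hjn : j + 1 < n) :
    D j (∏ i : Fin n, X i ^ stairExp m j i) = ∏ i : Fin n, X i ^ stairExp m (j + 1) i := by
  have hstep : (∏ i : Fin n, X i ^ stairExp m j i : MvPolynomial (Fin n) ℤ) =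
      X ⟨j, Nat.lt_of_succ_lt hjn⟩ * ∏ i : Fin n, X i ^ stairExp m (j + 1) i := by
    rw [X_mul_prod_X_pow]
    refine Finset.prod_congr rfl fun i _ => congrArg _ ?_
    simp only [stairExp, Fin.ext_iff]
    split_ifs <;> omega
  rw [hstep, (hD.isDivDiff hjn).apply_X_mul (by simp)
    (rename_swap_prod_X_pow _ (by simp only [stairExp]; split_ifs <;> omega))]

theorem descProd_prod_X_pow_stairExp (hD : IsDDiff D) {m : ℕ} (hm : m < n) :
    descProd D 0 m (∏ i : Fin n, X i ^ stairExp m 0 i) = ∏ i : Fin n, X i ^ stairExp m m i := by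
  suffices ∀ j ≤ m, descProd D 0 j (∏ i : Fin n, X i ^ stairExp m 0 i) =
      ∏ i : Fin n, X i ^ stairExp m j i from this m le_rfl
  intro j hj
  induction j with
  | zero => rfl
  | succ j ih =>
    rw [descProd_succ, Module.End.mul_apply, ih (by omega), zero_add,
      hD.apply_prod_X_pow_stairExp (by omega) (by omega)]

theorem prod_nilWord_staircase (hD : IsDDiff D) :
    ((nilWord n).map D).prod (staircase n) = 1 := by
  suffices ∀ m ≤ n, ((nilWord m).map D).prod (∏ i : Fin n, X i ^ stairExp m m i) = 1 by
    rw [staircase_eq]; exact this n le_rfl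
  intro m hm
  induction m with
  | zero => simp [nilWord, stairExp]
  | succ m ih =>
    have hexp : stairExp (m + 1) (m + 1) = stairExp m 0 := by
      funext i; simp only [stairExp]; split_ifs <;> omega
    rw [nilWord_succ, List.map_append, List.prod_append, prod_map_range_reverse,
      Module.End.mul_apply, hexp, hD.descProd_prod_X_pow_stairExp (by omega), ih (by omega)]

end IsDDiff

theorem en_idem_general {n : ℕ}
    (D : ℕ → MvPolynomial (Fin n) ℤ →ₗ[ℤ] MvPolynomial (Fin n) ℤ) (hD : IsDDiff D) :
    ∀ f : MvPolynomial (Fin n) ℤ,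
      staircase n * longOp D (staircase n * longOp D f) = staircase n * longOp D f := by
  intro f
  have hker : ∀ k, k + 1 < n → D k (longOp D f) = 0 := fun k hk => by
    rw [longOp_eq_prod, ← Module.End.mul_apply, hD.isNilCoxeter.mul_prod_nilWord hk,
      LinearMap.zero_apply]
  rw [longOp_eq_prod] at hker ⊢
  rw [hD.prod_map_apply_mul (fun k hk => add_two_le_of_mem_nilWord hk) _ hker,
    hD.prod_nilWord_staircase, one_mul]

/-- the operator e_n(f) = x_1^{n-1}⋯x_{n-1}·∂(n)(f) is an idempotent. -/
theorem en_idem {n : ℕ} (hn : 1 ≤ n)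
    (D : ℕ → MvPolynomial (Fin n) ℤ →ₗ[ℤ] MvPolynomial (Fin n) ℤ) (hD : IsDDiff D) :
    ∀ f : MvPolynomial (Fin n) ℤ,
      staircase n * longOp D (staircase n * longOp D f) = staircase n * longOp D f :=
  en_idem_general D hD
end
end
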